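/- Let M > 0, λ ≥ 0, c₀ > 0, δ₁ > 0, and δ > c₀², and let R be a Kruskal radius function on (−δ, c₀² + δ). Let Ω = {(μ,ν) ∈ ℝ² : μ < c₀ + δ₁, ν < c₀ + δ₁, μ + ν > −δ₁, −δ < μ·ν < c₀² + δ}, and let w : ℝ² → ℝ be smooth on Ω and satisfy the λ-mode wave equation in Kruskal coordinates at every point of Ω. If w(μ,ν) = 0 for every (μ,ν) ∈ Ω with μ ≤ 0, and w(μ,ν) = 0 for every (μ,ν) ∈ Ω with ν ≤ 0, then w(μ,ν) = 0 for all (μ,ν) ∈ [0,c₀] × [0,c₀]. (Unique continuation / finite-speed-of-propagation step in the proof of Theorem 5.1: vanishing of the extended solution below the characteristic segment {μ + ν = 0} forces vanishing in its domain of dependence.) -/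

import Mathlib

open MeasureTheory Filter Set Function
open scoped ContDiff

/-- A Kruskal radius function on `(−δ, X)`: a smooth positive function `R` with
`e^{R(x)/(2M)}·(R(x) − 2M) = x`, expressing the Schwarzschild radius in terms of the
product `μ·ν` of the Kruskal coordinates. -/
def IsKruskalRadius (M δ X : ℝ) (R : ℝ → ℝ) : Prop :=
  ContDiffOn ℝ ∞ R (Set.Ioo (-δ) X) ∧
  ∀ x ∈ Set.Ioo (-δ) X, 0 < R x ∧ Real.exp (R x/(2*M)) * (R x - 2*M) = x

/-- The λ-mode wave equation in Kruskal coordinates at the point `(μ,ν)`: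
`∂_ν(R(μν)²·∂_μ w) + ∂_μ(R(μν)²·∂_ν w) = (8M²λ²/(R(μν)·e^{R(μν)/(2M)}))·w`. -/
def KruskalEqAt (M lam : ℝ) (R : ℝ → ℝ) (w : ℝ → ℝ → ℝ) (μ ν : ℝ) : Prop :=
  deriv (fun n => (R (μ*n))^2 * deriv (fun m => w m n) μ) ν
    + deriv (fun m => (R (m*ν))^2 * deriv (fun n => w m n) ν) μ
    = (8*M^2*lam^2 / (R (μ*ν) * Real.exp (R (μ*ν)/(2*M)))) * w μ ν

/-- The domain used in the unique continuation step of Theorem 5.1. -/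
def KruskalDomain (c₀ δ₁ δ : ℝ) : Set (ℝ × ℝ) :=
  {p : ℝ × ℝ | p.1 < c₀ + δ₁ ∧ p.2 < c₀ + δ₁ ∧ -δ₁ < p.1 + p.2 ∧
    -δ < p.1 * p.2 ∧ p.1 * p.2 < c₀^2 + δ}

/-! The product `μν` stays in `(-δ, c₀² + δ)` on the square, where `R` is smooth and positive, so
dividing the λ-mode equation by `2R(μν)²` turns it into a Goursat problem
`∂_μ∂_ν w = a w + b ∂_μ w + c ∂_ν w` with continuous coefficients and data vanishing on the
characteristics `μ = 0` and `ν = 0`. Integrating from these axes, `φ = |w| + |∂_μ w| + |∂_ν w|`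
satisfies `φ(μ,ν) ≤ C (∫₀^μ φ(t,ν) dt + ∫₀^ν φ(μ,t) dt)`; iterating this inequality gives
`φ(μ,ν) ≤ B (2C(μ+ν))ⁿ / n!` for every `n`, hence `φ = 0`. -/

theorem HasFDerivAt.hasDerivAt_slice_fst {E : Type*} [NormedAddCommGroup E] [NormedSpace ℝ E]
    {f : ℝ × ℝ → E} {D : ℝ × ℝ →L[ℝ] E} {μ ν : ℝ} (hf : HasFDerivAt f D (μ, ν)) :
    HasDerivAt (fun m => f (m, ν)) (D (1, 0)) μ :=
  hf.comp_hasDerivAt μ ((hasDerivAt_id μ).prodMk (hasDerivAt_const μ ν))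

theorem HasFDerivAt.hasDerivAt_slice_snd {E : Type*} [NormedAddCommGroup E] [NormedSpace ℝ E]
    {f : ℝ × ℝ → E} {D : ℝ × ℝ →L[ℝ] E} {μ ν : ℝ} (hf : HasFDerivAt f D (μ, ν)) :
    HasDerivAt (fun n => f (μ, n)) (D (0, 1)) ν :=
  hf.comp_hasDerivAt ν ((hasDerivAt_const ν μ).prodMk (hasDerivAt_id ν))

section MixedPartials

variable {E : Type*} [NormedAddCommGroup E] [NormedSpace ℝ E] {f : ℝ × ℝ → E} {μ ν : ℝ}

theorem ContDiffAt.hasDerivAt_fderiv_slice_fst (hf : ContDiffAt ℝ 2 f (μ, ν)) (v : ℝ × ℝ) :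
    HasDerivAt (fun m => fderiv ℝ f (m, ν) v) (fderiv ℝ (fderiv ℝ f) (μ, ν) (1, 0) v) μ := by
  have hf' : DifferentiableAt ℝ (fderiv ℝ f) (μ, ν) :=
    (hf.fderiv_right (m := 1) le_rfl).differentiableAt one_ne_zero
  simpa using hf'.hasFDerivAt.hasDerivAt_slice_fst.clm_apply (hasDerivAt_const μ v)

theorem ContDiffAt.hasDerivAt_fderiv_slice_snd (hf : ContDiffAt ℝ 2 f (μ, ν)) (v : ℝ × ℝ) :
    HasDerivAt (fun n => fderiv ℝ f (μ, n) v) (fderiv ℝ (fderiv ℝ f) (μ, ν) (0, 1) v) ν := by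
  have hf' : DifferentiableAt ℝ (fderiv ℝ f) (μ, ν) :=
    (hf.fderiv_right (m := 1) le_rfl).differentiableAt one_ne_zero
  simpa using hf'.hasFDerivAt.hasDerivAt_slice_snd.clm_apply (hasDerivAt_const ν v)

theorem ContDiffAt.hasDerivAt_fderiv_one_zero_slice_snd (hf : ContDiffAt ℝ 2 f (μ, ν)) :
    HasDerivAt (fun n => fderiv ℝ f (μ, n) (1, 0))
      (fderiv ℝ (fderiv ℝ f) (μ, ν) (1, 0) (0, 1)) ν := by
  rw [hf.isSymmSndFDerivAt (by simp [minSmoothness_of_isRCLikeNormedField])]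
  exact hf.hasDerivAt_fderiv_slice_snd (1, 0)

end MixedPartials

theorem HasDerivAt.eq_zero_of_eqOn_Icc {E : Type*} [NormedAddCommGroup E] [NormedSpace ℝ E]
    {g : ℝ → E} {g' : E} {a b x : ℝ} (hg : HasDerivAt g g' x) (hab : a < b) (hx : x ∈ Icc a b)
    (h0 : EqOn g 0 (Icc a b)) : g' = 0 :=
  (uniqueDiffOn_Icc hab x hx).eq_deriv _
    (hg.hasDerivWithinAt.congr_of_mem (fun _ hy => (h0 hy).symm) hx) (hasDerivWithinAt_const _ _ _)

theorem abs_sub_le_integral_of_hasDerivAt {g g' ψ : ℝ → ℝ} {a b : ℝ} (hab : a ≤ b)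
    (hg : ∀ t ∈ Icc a b, HasDerivAt g (g' t) t) (hg' : ContinuousOn g' (Icc a b))
    (hψ : ContinuousOn ψ (Icc a b)) (hle : ∀ t ∈ Icc a b, |g' t| ≤ ψ t) :
    |g b - g a| ≤ ∫ t in a..b, ψ t := by
  rw [← uIcc_of_le hab] at hg hg' hψ
  rw [← intervalIntegral.integral_eq_sub_of_hasDerivAt hg hg'.intervalIntegrable]
  calc |∫ t in a..b, g' t| ≤ ∫ t in a..b, |g' t| :=
      intervalIntegral.abs_integral_le_integral_abs hab
    _ ≤ ∫ t in a..b, ψ t :=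
      intervalIntegral.integral_mono_on hab hg'.intervalIntegrable.abs hψ.intervalIntegrable hle

theorem integral_le_mul_add_pow_succ {g : ℝ → ℝ} {c d s : ℝ} {n : ℕ} (hs : 0 ≤ s) (hd : 0 ≤ d)
    (hc : 0 ≤ c) (hg : ContinuousOn g (Icc 0 s)) (h : ∀ t ∈ Icc 0 s, g t ≤ c * (t + d) ^ n) :
    ∫ t in (0 : ℝ)..s, g t ≤ c * ((s + d) ^ (n + 1) / (n + 1)) := calc
  _ ≤ ∫ t in (0 : ℝ)..s, c * (t + d) ^ n :=
    intervalIntegral.integral_mono_on hs (hg.intervalIntegrable_of_Icc hs)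
      (Continuous.intervalIntegrable (by fun_prop) _ _) h
  _ = c * (((s + d) ^ (n + 1) - d ^ (n + 1)) / (n + 1)) := by
    rw [intervalIntegral.integral_const_mul,
      intervalIntegral.integral_comp_add_right (fun t => t ^ n), integral_pow, zero_add]
  _ ≤ c * ((s + d) ^ (n + 1) / (n + 1)) := by
    gcongr
    exact sub_le_self _ (by positivity)

section Slices

variable {E : Type*} [TopologicalSpace E] {g : ℝ × ℝ → E} {s s' t t' : Set ℝ}

theorem ContinuousOn.slice_fst (hg : ContinuousOn g (s ×ˢ t)) {ν : ℝ} (hν : ν ∈ t)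
    (hs : s' ⊆ s) : ContinuousOn (fun m => g (m, ν)) s' :=
  (hg.uncurry_right (f := curry g) ν hν).mono hs

theorem ContinuousOn.slice_snd (hg : ContinuousOn g (s ×ˢ t)) {μ : ℝ} (hμ : μ ∈ s)
    (ht : t' ⊆ t) : ContinuousOn (fun n => g (μ, n)) t' :=
  (hg.uncurry_left (f := curry g) μ hμ).mono ht

end Slices

theorem le_zero_of_le_mul_integral_add_integral {φ : ℝ × ℝ → ℝ} {a b C : ℝ}
    (hφ : ContinuousOn φ (Icc 0 a ×ˢ Icc 0 b)) (hC : 0 ≤ C)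
    (h : ∀ μ ∈ Icc 0 a, ∀ ν ∈ Icc 0 b,
      φ (μ, ν) ≤ C * ((∫ t in (0 : ℝ)..μ, φ (t, ν)) + ∫ t in (0 : ℝ)..ν, φ (μ, t))) :
    ∀ μ ∈ Icc 0 a, ∀ ν ∈ Icc 0 b, φ (μ, ν) ≤ 0 := by
  obtain ⟨B, hB⟩ := (isCompact_Icc.prod isCompact_Icc).exists_bound_of_continuousOn hφ
  set K := 2 * C
  have bound : ∀ n : ℕ, ∀ μ ∈ Icc 0 a, ∀ ν ∈ Icc 0 b,
      φ (μ, ν) ≤ |B| * K ^ n / n.factorial * (μ + ν) ^ n := by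
    intro n
    induction n with
    | zero =>
      intro μ hμ ν hν
      simpa using (le_abs_self _).trans ((hB _ ⟨hμ, hν⟩).trans (le_abs_self B))
    | succ n ih =>
      intro μ hμ ν hν
      set c := |B| * K ^ n / n.factorial
      have hc : 0 ≤ c := by positivity
      have I₁ : ∫ t in (0 : ℝ)..μ, φ (t, ν) ≤ c * ((μ + ν) ^ (n + 1) / (n + 1)) :=
        integral_le_mul_add_pow_succ hμ.1 hν.1 hc (hφ.slice_fst hν (Icc_subset_Icc_right hμ.2))
          fun t ht => ih t ⟨ht.1, ht.2.trans hμ.2⟩ ν hν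
      have I₂ : ∫ t in (0 : ℝ)..ν, φ (μ, t) ≤ c * ((μ + ν) ^ (n + 1) / (n + 1)) := by
        rw [add_comm μ]
        exact integral_le_mul_add_pow_succ hν.1 hμ.1 hc
          (hφ.slice_snd hμ (Icc_subset_Icc_right hν.2))
          fun t ht => (ih μ hμ t ⟨ht.1, ht.2.trans hν.2⟩).trans_eq (by rw [add_comm μ])
      calc φ (μ, ν) ≤ C * (c * ((μ + ν) ^ (n + 1) / (n + 1)) + c * ((μ + ν) ^ (n + 1) / (n + 1))) :=
            (h μ hμ ν hν).trans (by gcongr)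
        _ = |B| * K ^ (n + 1) / (n + 1).factorial * (μ + ν) ^ (n + 1) := by
          simp only [c, K, Nat.factorial_succ]
          push_cast
          field_simp
          ring
  intro μ hμ ν hν
  have hlim : Tendsto (fun n : ℕ => |B| * K ^ n / n.factorial * (μ + ν) ^ n) atTop (nhds 0) := by
    simpa [mul_pow, mul_div_assoc, mul_comm, mul_left_comm] using
      (FloorSemiring.tendsto_pow_div_factorial_atTop (K * (μ + ν))).const_mul |B|
  exact ge_of_tendsto' hlim fun n => bound n μ hμ ν hν

theorem IsCompact.exists_abs_le_of_eq_linear_combination {X : Type*} [TopologicalSpace X]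
    {S : Set X} (hS : IsCompact S) {A B C F u v w : X → ℝ} (hA : ContinuousOn A S)
    (hB : ContinuousOn B S) (hC : ContinuousOn C S)
    (h : ∀ x ∈ S, F x = A x * u x + B x * v x + C x * w x) :
    ∃ K, 0 ≤ K ∧ ∀ x ∈ S, |F x| ≤ K * (|u x| + |v x| + |w x|) := by
  obtain ⟨K, hK⟩ := hS.exists_bound_of_continuousOn (hA.prodMk (hB.prodMk hC))
  refine ⟨|K|, abs_nonneg K, fun x hx => ?_⟩
  have hK' := (hK x hx).trans (le_abs_self K)
  have hAx : |A x| ≤ |K| := (norm_fst_le _).trans hK'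
  have hBx : |B x| ≤ |K| := (norm_fst_le _).trans ((norm_snd_le _).trans hK')
  have hCx : |C x| ≤ |K| := (norm_snd_le _).trans ((norm_snd_le _).trans hK')
  rw [h x hx]
  calc |A x * u x + B x * v x + C x * w x| ≤ |A x| * |u x| + |B x| * |v x| + |C x| * |w x| := by
        simpa only [abs_mul] using abs_add_three (A x * u x) (B x * v x) (C x * w x)
    _ ≤ |K| * (|u x| + |v x| + |w x|) := by
        rw [mul_add, mul_add]
        gcongr

section Goursat

variable {f : ℝ × ℝ → ℝ} {a b K μ ν : ℝ}

noncomputable def pointwiseC1Norm (f : ℝ × ℝ → ℝ) (x : ℝ × ℝ) : ℝ :=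
  |f x| + |fderiv ℝ f x (1, 0)| + |fderiv ℝ f x (0, 1)|

theorem continuousOn_pointwiseC1Norm {s : Set (ℝ × ℝ)} (hf : ∀ x ∈ s, ContDiffAt ℝ 1 f x) :
    ContinuousOn (pointwiseC1Norm f) s := by
  refine continuousOn_of_forall_continuousAt fun x hx => ?_
  have hf' := (hf x hx).continuousAt_fderiv one_ne_zero
  exact ((hf x hx).continuousAt.abs.add (hf'.clm_apply continuousAt_const).abs).add
    (hf'.clm_apply continuousAt_const).abs

theorem continuousOn_fderiv_fderiv_apply {s : Set (ℝ × ℝ)} (hf : ∀ x ∈ s, ContDiffAt ℝ 2 f x)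
    (v w : ℝ × ℝ) : ContinuousOn (fun x => fderiv ℝ (fderiv ℝ f) x v w) s :=
  continuousOn_of_forall_continuousAt fun x hx =>
    ((((hf x hx).fderiv_right (m := 1) le_rfl).continuousAt_fderiv one_ne_zero).clm_apply
      continuousAt_const).clm_apply continuousAt_const

theorem abs_le_integral_pointwiseC1Norm (hf : ∀ x ∈ Icc 0 a ×ˢ Icc 0 b, ContDiffAt ℝ 1 f x)
    (h₁ : ∀ ν ∈ Icc 0 b, f (0, ν) = 0) (hμ : μ ∈ Icc 0 a) (hν : ν ∈ Icc 0 b) :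
    |f (μ, ν)| ≤ ∫ t in (0 : ℝ)..μ, pointwiseC1Norm f (t, ν) := by
  have hμa : Icc 0 μ ⊆ Icc 0 a := Icc_subset_Icc_right hμ.2
  have hf' := continuousOn_of_forall_continuousAt fun x hx =>
    (hf x hx).continuousAt_fderiv one_ne_zero
  have := abs_sub_le_integral_of_hasDerivAt (g := fun m => f (m, ν)) hμ.1
    (fun t ht =>
      ((hf _ ⟨hμa ht, hν⟩).differentiableAt one_ne_zero).hasFDerivAt.hasDerivAt_slice_fst)
    ((hf'.clm_apply continuousOn_const).slice_fst hν hμa)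
    ((continuousOn_pointwiseC1Norm hf).slice_fst hν hμa)
    (fun t _ => le_add_of_le_of_nonneg (le_add_of_nonneg_left (abs_nonneg _)) (abs_nonneg _))
  rwa [h₁ ν hν, sub_zero] at this

theorem abs_fderiv_one_zero_le (ha : 0 < a) (hf : ∀ x ∈ Icc 0 a ×ˢ Icc 0 b, ContDiffAt ℝ 2 f x)
    (h₂ : ∀ μ ∈ Icc 0 a, f (μ, 0) = 0)
    (hK : ∀ x ∈ Icc 0 a ×ˢ Icc 0 b,
      |fderiv ℝ (fderiv ℝ f) x (1, 0) (0, 1)| ≤ K * pointwiseC1Norm f x)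
    (hμ : μ ∈ Icc 0 a) (hν : ν ∈ Icc 0 b) :
    |fderiv ℝ f (μ, ν) (1, 0)| ≤ K * ∫ t in (0 : ℝ)..ν, pointwiseC1Norm f (μ, t) := by
  have hνb : Icc 0 ν ⊆ Icc 0 b := Icc_subset_Icc_right hν.2
  have hφ := continuousOn_pointwiseC1Norm fun x hx => (hf x hx).of_le one_le_two
  have h₀ : fderiv ℝ f (μ, 0) (1, 0) = 0 :=
    ((hf _ ⟨hμ, le_rfl, hν.1.trans hν.2⟩).differentiableAt two_ne_zero).hasFDerivAt
      |>.hasDerivAt_slice_fst.eq_zero_of_eqOn_Icc ha hμ h₂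
  have := abs_sub_le_integral_of_hasDerivAt (g := fun n => fderiv ℝ f (μ, n) (1, 0)) hν.1
    (fun t ht => (hf _ ⟨hμ, hνb ht⟩).hasDerivAt_fderiv_one_zero_slice_snd)
    ((continuousOn_fderiv_fderiv_apply hf _ _).slice_snd hμ hνb)
    ((hφ.slice_snd hμ hνb).const_mul K)
    (fun t ht => hK _ ⟨hμ, hνb ht⟩)
  rwa [h₀, sub_zero, intervalIntegral.integral_const_mul] at this

theorem abs_fderiv_zero_one_le (hb : 0 < b) (hf : ∀ x ∈ Icc 0 a ×ˢ Icc 0 b, ContDiffAt ℝ 2 f x)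
    (h₁ : ∀ ν ∈ Icc 0 b, f (0, ν) = 0)
    (hK : ∀ x ∈ Icc 0 a ×ˢ Icc 0 b,
      |fderiv ℝ (fderiv ℝ f) x (1, 0) (0, 1)| ≤ K * pointwiseC1Norm f x)
    (hμ : μ ∈ Icc 0 a) (hν : ν ∈ Icc 0 b) :
    |fderiv ℝ f (μ, ν) (0, 1)| ≤ K * ∫ t in (0 : ℝ)..μ, pointwiseC1Norm f (t, ν) := by
  have hμa : Icc 0 μ ⊆ Icc 0 a := Icc_subset_Icc_right hμ.2
  have hφ := continuousOn_pointwiseC1Norm fun x hx => (hf x hx).of_le one_le_two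
  have h₀ : fderiv ℝ f (0, ν) (0, 1) = 0 :=
    ((hf _ ⟨⟨le_rfl, hμ.1.trans hμ.2⟩, hν⟩).differentiableAt two_ne_zero).hasFDerivAt
      |>.hasDerivAt_slice_snd.eq_zero_of_eqOn_Icc hb hν h₁
  have := abs_sub_le_integral_of_hasDerivAt (g := fun m => fderiv ℝ f (m, ν) (0, 1)) hμ.1
    (fun t ht => (hf _ ⟨hμa ht, hν⟩).hasDerivAt_fderiv_slice_fst (0, 1))
    ((continuousOn_fderiv_fderiv_apply hf _ _).slice_fst hν hμa)
    ((hφ.slice_fst hν hμa).const_mul K)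
    (fun t ht => hK _ ⟨hμa ht, hν⟩)
  rwa [h₀, sub_zero, intervalIntegral.integral_const_mul] at this

theorem eq_zero_of_goursat {A B C : ℝ × ℝ → ℝ} (ha : 0 < a) (hb : 0 < b)
    (hf : ∀ x ∈ Icc 0 a ×ˢ Icc 0 b, ContDiffAt ℝ 2 f x)
    (hA : ContinuousOn A (Icc 0 a ×ˢ Icc 0 b)) (hB : ContinuousOn B (Icc 0 a ×ˢ Icc 0 b))
    (hC : ContinuousOn C (Icc 0 a ×ˢ Icc 0 b))
    (heq : ∀ x ∈ Icc 0 a ×ˢ Icc 0 b, fderiv ℝ (fderiv ℝ f) x (1, 0) (0, 1) =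
      A x * f x + B x * fderiv ℝ f x (1, 0) + C x * fderiv ℝ f x (0, 1))
    (h₁ : ∀ ν ∈ Icc 0 b, f (0, ν) = 0) (h₂ : ∀ μ ∈ Icc 0 a, f (μ, 0) = 0) :
    ∀ μ ∈ Icc 0 a, ∀ ν ∈ Icc 0 b, f (μ, ν) = 0 := by
  have hf₁ : ∀ x ∈ Icc 0 a ×ˢ Icc 0 b, ContDiffAt ℝ 1 f x := fun x hx => (hf x hx).of_le one_le_two
  obtain ⟨K, hK₀, hK⟩ := (isCompact_Icc.prod isCompact_Icc).exists_abs_le_of_eq_linear_combination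
    hA hB hC heq
  have hφ : ∀ μ ∈ Icc 0 a, ∀ ν ∈ Icc 0 b, pointwiseC1Norm f (μ, ν) ≤
      (1 + K) * ((∫ t in (0 : ℝ)..μ, pointwiseC1Norm f (t, ν)) +
        ∫ t in (0 : ℝ)..ν, pointwiseC1Norm f (μ, t)) := by
    intro μ hμ ν hν
    have h₀ := abs_le_integral_pointwiseC1Norm hf₁ h₁ hμ hν
    have hP := abs_fderiv_one_zero_le ha hf h₂ hK hμ hν
    have hQ := abs_fderiv_zero_one_le hb hf h₁ hK hμ hν
    have hI : 0 ≤ ∫ t in (0 : ℝ)..ν, pointwiseC1Norm f (μ, t) :=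
      intervalIntegral.integral_nonneg hν.1 fun t _ => by unfold pointwiseC1Norm; positivity
    rw [pointwiseC1Norm]
    linarith
  intro μ hμ ν hν
  refine abs_nonpos_iff.mp (le_trans ?_ (le_zero_of_le_mul_integral_add_integral
    (continuousOn_pointwiseC1Norm hf₁) (by linarith) hφ μ hμ ν hν))
  exact le_add_of_le_of_nonneg (le_add_of_nonneg_right (abs_nonneg _)) (abs_nonneg _)

noncomputable def kruskalPotential (M lam r : ℝ) : ℝ := 8*M^2*lam^2 / (r * Real.exp (r/(2*M)))

theorem isOpen_kruskalDomain (c₀ δ₁ δ : ℝ) : IsOpen (KruskalDomain c₀ δ₁ δ) := by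
  simp only [KruskalDomain, Set.ofPred_and]
  refine (isOpen_lt ?_ ?_).inter ((isOpen_lt ?_ ?_).inter ((isOpen_lt ?_ ?_).inter
    ((isOpen_lt ?_ ?_).inter (isOpen_lt ?_ ?_)))) <;> fun_prop

theorem Icc_prod_Icc_subset_kruskalDomain {c₀ δ₁ δ : ℝ} (hδ₁ : 0 < δ₁) (hδ : c₀ ^ 2 < δ) :
    Icc 0 c₀ ×ˢ Icc 0 c₀ ⊆ KruskalDomain c₀ δ₁ δ := by
  rintro ⟨μ, ν⟩ ⟨⟨hμ₀, hμ₁⟩, ⟨hν₀, hν₁⟩⟩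
  refine ⟨by linarith, by linarith, by linarith, by nlinarith, by nlinarith⟩

namespace IsKruskalRadius

variable {M δ X : ℝ} {R : ℝ → ℝ}

theorem differentiableAt (hR : IsKruskalRadius M δ X R) {y : ℝ} (hy : y ∈ Ioo (-δ) X) :
    DifferentiableAt ℝ R y :=
  (hR.1.contDiffAt (isOpen_Ioo.mem_nhds hy)).differentiableAt (by simp)

theorem continuousOn_potential_div (hR : IsKruskalRadius M δ X R) (lam : ℝ) :
    ContinuousOn (fun y => kruskalPotential M lam (R y) / (2 * R y ^ 2)) (Ioo (-δ) X) := by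
  have hRc := hR.1.continuousOn
  refine ContinuousOn.div ?_ (by fun_prop) fun y hy => by have := (hR.2 y hy).1; positivity
  exact continuousOn_const.div (hRc.mul (hRc.div_const _).rexp)
    fun y hy => by have := (hR.2 y hy).1; positivity

theorem continuousOn_logDeriv (hR : IsKruskalRadius M δ X R) :
    ContinuousOn (logDeriv R) (Ioo (-δ) X) :=
  ((hR.1.continuousOn_deriv_of_isOpen isOpen_Ioo (by simp)).div hR.1.continuousOn
    fun y hy => (hR.2 y hy).1.ne')

end IsKruskalRadius

theorem KruskalEqAt.fderiv_fderiv_eq {M lam : ℝ} {R : ℝ → ℝ} {w : ℝ → ℝ → ℝ} {μ ν : ℝ}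
    (h : KruskalEqAt M lam R w μ ν) (hw : ContDiffAt ℝ 2 (uncurry w) (μ, ν))
    (hR : DifferentiableAt ℝ R (μ * ν)) (hR₀ : R (μ * ν) ≠ 0) :
    fderiv ℝ (fderiv ℝ (uncurry w)) (μ, ν) (1, 0) (0, 1) =
      kruskalPotential M lam (R (μ * ν)) / (2 * R (μ * ν) ^ 2) * uncurry w (μ, ν)
      + -(μ * logDeriv R (μ * ν)) * fderiv ℝ (uncurry w) (μ, ν) (1, 0)
      + -(ν * logDeriv R (μ * ν)) * fderiv ℝ (uncurry w) (μ, ν) (0, 1) := by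
  set f := uncurry w
  have hdiff : ∀ᶠ y in nhds (μ, ν), DifferentiableAt ℝ f y :=
    (hw.eventually (by simp)).mono fun y hy => hy.differentiableAt two_ne_zero
  have e₁ : (fun n => R (μ * n) ^ 2 * deriv (fun m => w m n) μ) =ᶠ[nhds ν]
      fun n => R (μ * n) ^ 2 * fderiv ℝ f (μ, n) (1, 0) := by
    filter_upwards [((Continuous.prodMk_right μ).tendsto ν).eventually hdiff] with n hn
    rw [show deriv (fun m => w m n) μ = _ from hn.hasFDerivAt.hasDerivAt_slice_fst.deriv]
  have e₂ : (fun m => R (m * ν) ^ 2 * deriv (fun n => w m n) ν) =ᶠ[nhds μ]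
      fun m => R (m * ν) ^ 2 * fderiv ℝ f (m, ν) (0, 1) := by
    filter_upwards [((Continuous.prodMk_left ν).tendsto μ).eventually hdiff] with m hm
    rw [show deriv (fun n => w m n) ν = _ from hm.hasFDerivAt.hasDerivAt_slice_snd.deriv]
  have hsq : HasDerivAt (fun y => R y ^ 2) (2 * R (μ * ν) * deriv R (μ * ν)) (μ * ν) := by
    simpa using hR.hasDerivAt.fun_pow 2
  have hR₁ : HasDerivAt (fun n => R (μ * n) ^ 2) (2 * R (μ * ν) * deriv R (μ * ν) * μ) ν :=
    hsq.comp ν (hasDerivAt_const_mul μ)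
  have hR₂ : HasDerivAt (fun m => R (m * ν) ^ 2) (2 * R (μ * ν) * deriv R (μ * ν) * ν) μ := by
    exact hsq.comp μ (hasDerivAt_mul_const ν)
  have he : _ = kruskalPotential M lam (R (μ * ν)) * f (μ, ν) := h
  rw [e₁.deriv_eq, e₂.deriv_eq, (hR₁.fun_mul hw.hasDerivAt_fderiv_one_zero_slice_snd).deriv,
    (hR₂.fun_mul (hw.hasDerivAt_fderiv_slice_fst (0, 1))).deriv] at he
  rw [logDeriv_apply]
  field_simp
  linear_combination he

theorem unique_continuation_kruskal_general
    (M lam c₀ δ₁ δ : ℝ)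
    (hc₀ : 0 < c₀) (hδ₁ : 0 < δ₁) (hδ : c₀^2 < δ)
    (R : ℝ → ℝ) (hR : IsKruskalRadius M δ (c₀^2 + δ) R)
    (w : ℝ → ℝ → ℝ)
    (hw : ContDiffOn ℝ ∞ (Function.uncurry w) (KruskalDomain c₀ δ₁ δ))
    (heq : ∀ p ∈ KruskalDomain c₀ δ₁ δ, KruskalEqAt M lam R w p.1 p.2)
    (h1 : ∀ p ∈ KruskalDomain c₀ δ₁ δ, p.1 ≤ 0 → w p.1 p.2 = 0)
    (h2 : ∀ p ∈ KruskalDomain c₀ δ₁ δ, p.2 ≤ 0 → w p.1 p.2 = 0) :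
    ∀ μ ∈ Set.Icc (0:ℝ) c₀, ∀ ν ∈ Set.Icc (0:ℝ) c₀, w μ ν = 0 := by
  have hS := Icc_prod_Icc_subset_kruskalDomain hδ₁ hδ
  have hw₂ : ∀ x ∈ Icc 0 c₀ ×ˢ Icc 0 c₀, ContDiffAt ℝ 2 (uncurry w) x := fun x hx =>
    (hw.of_le (by decide)).contDiffAt ((isOpen_kruskalDomain c₀ δ₁ δ).mem_nhds (hS hx))
  have hmul : MapsTo (fun x : ℝ × ℝ => x.1 * x.2) (Icc 0 c₀ ×ˢ Icc 0 c₀) (Ioo (-δ) (c₀ ^ 2 + δ)) :=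
    fun x hx => ⟨(hS hx).2.2.2.1, (hS hx).2.2.2.2⟩
  have hmulc : ContinuousOn (fun x : ℝ × ℝ => x.1 * x.2) (Icc 0 c₀ ×ˢ Icc 0 c₀) := by fun_prop
  have hk := hR.continuousOn_logDeriv.comp hmulc hmul
  refine eq_zero_of_goursat hc₀ hc₀ hw₂ ((hR.continuousOn_potential_div lam).comp hmulc hmul)
    (continuousOn_fst.mul hk).neg (continuousOn_snd.mul hk).neg
    (fun x hx => (heq x (hS hx)).fderiv_fderiv_eq (hw₂ x hx) (hR.differentiableAt (hmul hx))
      (hR.2 _ (hmul hx)).1.ne')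
    (fun ν hν => h1 (0, ν) (hS ⟨⟨le_rfl, hc₀.le⟩, hν⟩) le_rfl)
    (fun μ hμ => h2 (μ, 0) (hS ⟨hμ, ⟨le_rfl, hc₀.le⟩⟩) le_rfl)

/-- Unique continuation / finite speed of propagation step in the proof of Theorem 5.1:
a smooth solution of the λ-mode Kruskal wave equation vanishing on `{μ ≤ 0}` and on
`{ν ≤ 0}` vanishes on `[0,c₀] × [0,c₀]`. -/
theorem unique_continuation_kruskal
    (M lam c₀ δ₁ δ : ℝ) (hM : 0 < M) (hlam : 0 ≤ lam)
    (hc₀ : 0 < c₀) (hδ₁ : 0 < δ₁) (hδ : c₀^2 < δ)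
    (R : ℝ → ℝ) (hR : IsKruskalRadius M δ (c₀^2 + δ) R)
    (w : ℝ → ℝ → ℝ)
    (hw : ContDiffOn ℝ ∞ (Function.uncurry w) (KruskalDomain c₀ δ₁ δ))
    (heq : ∀ p ∈ KruskalDomain c₀ δ₁ δ, KruskalEqAt M lam R w p.1 p.2)
    (h1 : ∀ p ∈ KruskalDomain c₀ δ₁ δ, p.1 ≤ 0 → w p.1 p.2 = 0)
    (h2 : ∀ p ∈ KruskalDomain c₀ δ₁ δ, p.2 ≤ 0 → w p.1 p.2 = 0) :
    ∀ μ ∈ Set.Icc (0:ℝ) c₀, ∀ ν ∈ Set.Icc (0:ℝ) c₀, w μ ν = 0 :=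
  unique_continuation_kruskal_general M lam c₀ δ₁ δ hc₀ hδ₁ hδ R hR w hw heq h1 h2
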